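/- arXiv:2407.18457 — 3 statements merged into one kernel-verified Lean document; each statement's English description precedes it below -/
import Mathlib

section
/- Let f1, f2 : ℝ → ℝ be continuous and let p1, p2 : ℝ → ℝ be polynomial functions of degree at most 1; set u(x,y) = f1(x)·p1(y) + f2(y)·p2(x). Let P be the bilinear corner interpolant on the unit square of u and let s be the linear transfinite boundary interpolant on the unit square of u − P. Then u(x,y) = s(x,y) + P(x,y) for all (x,y) ∈ [0,1]². -/
/-- The bilinear corner interpolant on the unit square. -/
noncomputable def bilinearCorner (u : ℝ → ℝ → ℝ) (x y : ℝ) : ℝ :=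
  (1 - x) * (1 - y) * u 0 0 + (1 - x) * y * u 0 1 + x * (1 - y) * u 1 0 + x * y * u 1 1

/-- The linear transfinite boundary interpolant on the unit square. -/
noncomputable def linTransfinite (v : ℝ → ℝ → ℝ) (x y : ℝ) : ℝ :=
  (1 - x) * v 0 y + x * v 1 y + (1 - y) * v x 0 + y * v x 1

/-!
Since `P` is bilinear, each of its two one-dimensional linear interpolants reproduces it, so the
transfinite interpolant of `P` is `2 P` and `s + P` is the Coons patch of `u`: the transfinite
interpolant of `u` minus its bilinear corner interpolant. The Coons patch is linear in `u` and
reproduces every function that is affine in one of the two variables; `f1(x) p1(y)` is affine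
in `y` and `f2(y) p2(x)` is affine in `x`.
-/

theorem Polynomial.eval_eq_of_degree_le_one {p : Polynomial ℝ} (hp : p.degree ≤ 1) (t : ℝ) :
    p.eval t = (1 - t) * p.eval 0 + t * p.eval 1 := by
  obtain ⟨a, b, rfl⟩ :=
    Polynomial.exists_eq_X_add_C_of_natDegree_le_one (Polynomial.natDegree_le_iff_degree_le.2 hp)
  simp only [Polynomial.eval_add, Polynomial.eval_mul, Polynomial.eval_C, Polynomial.eval_X]
  ring

noncomputable def coonsPatch (u : ℝ → ℝ → ℝ) (x y : ℝ) : ℝ :=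
  linTransfinite u x y - bilinearCorner u x y

theorem linTransfinite_sub_bilinearCorner_add_bilinearCorner (u : ℝ → ℝ → ℝ) (x y : ℝ) :
    linTransfinite (fun a b => u a b - bilinearCorner u a b) x y + bilinearCorner u x y =
      coonsPatch u x y := by
  simp only [coonsPatch, linTransfinite, bilinearCorner]
  ring

theorem coonsPatch_add (u v : ℝ → ℝ → ℝ) (x y : ℝ) :
    coonsPatch (fun a b => u a b + v a b) x y = coonsPatch u x y + coonsPatch v x y := by
  simp only [coonsPatch, linTransfinite, bilinearCorner]
  ring

theorem coonsPatch_eq_self_of_affine_snd {u : ℝ → ℝ → ℝ}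
    (hu : ∀ x y, u x y = (1 - y) * u x 0 + y * u x 1) (x y : ℝ) :
    coonsPatch u x y = u x y := by
  simp only [coonsPatch, linTransfinite, bilinearCorner]
  rw [hu 0 y, hu 1 y, hu x y]
  ring

theorem coonsPatch_eq_self_of_affine_fst {u : ℝ → ℝ → ℝ}
    (hu : ∀ x y, u x y = (1 - x) * u 0 y + x * u 1 y) (x y : ℝ) :
    coonsPatch u x y = u x y := by
  simp only [coonsPatch, linTransfinite, bilinearCorner]
  rw [hu x 0, hu x 1, hu x y]
  ring

theorem deterministic_part_reproduces_u_general
    (f1 f2 : ℝ → ℝ)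
    (p1 p2 : Polynomial ℝ) (hp1 : p1.degree ≤ 1) (hp2 : p2.degree ≤ 1)
    (u : ℝ → ℝ → ℝ)
    (hu : ∀ x y : ℝ, u x y = f1 x * p1.eval y + f2 y * p2.eval x)
    (P : ℝ → ℝ → ℝ) (hP : ∀ x y : ℝ, P x y = bilinearCorner u x y)
    (s : ℝ → ℝ → ℝ)
    (hs : ∀ x y : ℝ, s x y = linTransfinite (fun a b => u a b - P a b) x y) :
    ∀ x ∈ Set.Icc (0 : ℝ) 1, ∀ y ∈ Set.Icc (0 : ℝ) 1,
      u x y = s x y + P x y := by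
  intro x _ y _
  obtain rfl : P = bilinearCorner u := funext₂ hP
  obtain rfl : u = fun a b => f1 a * p1.eval b + f2 b * p2.eval a := funext₂ hu
  rw [hs, linTransfinite_sub_bilinearCorner_add_bilinearCorner, coonsPatch_add,
    coonsPatch_eq_self_of_affine_snd, coonsPatch_eq_self_of_affine_fst]
  · intro a b
    rw [Polynomial.eval_eq_of_degree_le_one hp2 a]
    ring
  · intro a b
    rw [Polynomial.eval_eq_of_degree_le_one hp1 b]
    ring

/-- Core of the proof of Theorem 2.2: for `u(x,y) = f1(x)p1(y) + f2(y)p2(x)` with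
`deg p1, deg p2 ≤ 1`, the deterministic part `s + P` reproduces `u` on the unit square. -/
theorem deterministic_part_reproduces_u
    (f1 f2 : ℝ → ℝ) (hf1 : Continuous f1) (hf2 : Continuous f2)
    (p1 p2 : Polynomial ℝ) (hp1 : p1.degree ≤ 1) (hp2 : p2.degree ≤ 1)
    (u : ℝ → ℝ → ℝ)
    (hu : ∀ x y : ℝ, u x y = f1 x * p1.eval y + f2 y * p2.eval x)
    (P : ℝ → ℝ → ℝ) (hP : ∀ x y : ℝ, P x y = bilinearCorner u x y)
    (s : ℝ → ℝ → ℝ)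
    (hs : ∀ x y : ℝ, s x y = linTransfinite (fun a b => u a b - P a b) x y) :
    ∀ x ∈ Set.Icc (0 : ℝ) 1, ∀ y ∈ Set.Icc (0 : ℝ) 1,
      u x y = s x y + P x y :=
  deterministic_part_reproduces_u_general f1 f2 p1 p2 hp1 hp2 u hu P hP s hs
end

section
/- Let u : ℝ² → ℝ be C², let P be the bicubic Hermite corner interpolant on the unit square of u, and let s be the Hermite transfinite boundary interpolant on the unit square of ũ = u − P. Then for every differentiable function φ : ℝ² → ℝ, the function û(x,y) = x²(1−x)²y²(1−y)²·φ(x,y) + s(x,y) + P(x,y) satisfies, for all x, y ∈ [0,1]: û(0,y) = u(0,y), û(1,y) = u(1,y), û(x,0) = u(x,0), û(x,1) = u(x,1), and ∂û/∂x(0,y) = ∂u/∂x(0,y), ∂û/∂x(1,y) = ∂u/∂x(1,y), ∂û/∂y(x,0) = ∂u/∂y(x,0), ∂û/∂y(x,1) = ∂u/∂y(x,1). In other words, û satisfies the clamped boundary conditions û = u and ∂û/∂n = ∂u/∂n exactly on the boundary of [0,1]². -/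
/-!
The corner interpolant `P` reproduces the Hermite data of `u` (value, gradient, mixed partial) at
the four corners, so `w = u - P` has vanishing corner data. Near a side `x = c` the transfinite
interpolant of `w` is the one-dimensional Hermite interpolant of `w` across that side, which
reproduces `w` and `∂w/∂x` at `x = c`, plus a combination of `w` and `∂w/∂y` along the lines
`y = 0, 1`, which vanishes to first order at `x = c` because the corner data do. The bubble
`x²(1-x)²y²(1-y)²φ` also vanishes to first order on the boundary, hence so does
`û - u = x²(1-x)²y²(1-y)²φ + (s - w)`. The sides `y = c` follow by exchanging the variables;
this is where the symmetry of the second derivative of `u` is needed.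
-/

/-- Cubic Hermite basis functions on `[0,1]`. -/
noncomputable def H0 (x : ℝ) : ℝ := (1 - x) ^ 2 * (1 + 2 * x)
noncomputable def H1 (x : ℝ) : ℝ := x ^ 2 * (3 - 2 * x)
noncomputable def G0 (x : ℝ) : ℝ := x * (1 - x) ^ 2
noncomputable def G1 (x : ℝ) : ℝ := x ^ 2 * (x - 1)

/-- Partial derivative in the first variable. -/
noncomputable def pdx (v : ℝ → ℝ → ℝ) (x y : ℝ) : ℝ := deriv (fun t => v t y) x

/-- Partial derivative in the second variable. -/
noncomputable def pdy (v : ℝ → ℝ → ℝ) (x y : ℝ) : ℝ := deriv (fun t => v x t) y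

/-- Mixed second partial derivative `∂²v/∂x∂y`. -/
noncomputable def pdxy (v : ℝ → ℝ → ℝ) (x y : ℝ) : ℝ := pdx (fun a b => pdy v a b) x y

/-- The bicubic Hermite corner interpolant on the unit square. -/
noncomputable def bicubicCorner (u : ℝ → ℝ → ℝ) (x y : ℝ) : ℝ :=
    H0 x * H0 y * u 0 0 + H0 x * H1 y * u 0 1
  + H1 x * H0 y * u 1 0 + H1 x * H1 y * u 1 1
  + G0 x * H0 y * pdx u 0 0 + G0 x * H1 y * pdx u 0 1
  + G1 x * H0 y * pdx u 1 0 + G1 x * H1 y * pdx u 1 1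
  + H0 x * G0 y * pdy u 0 0 + H0 x * G1 y * pdy u 0 1
  + H1 x * G0 y * pdy u 1 0 + H1 x * G1 y * pdy u 1 1
  + G0 x * G0 y * pdxy u 0 0 + G0 x * G1 y * pdxy u 0 1
  + G1 x * G0 y * pdxy u 1 0 + G1 x * G1 y * pdxy u 1 1

/-- The Hermite transfinite boundary interpolant on the unit square. -/
noncomputable def hermiteTransfinite (v : ℝ → ℝ → ℝ) (x y : ℝ) : ℝ :=
    H0 x * v 0 y + H1 x * v 1 y + H0 y * v x 0 + H1 y * v x 1
  + G0 x * pdx v 0 y + G1 x * pdx v 1 y + G0 y * pdy v x 0 + G1 y * pdy v x 1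


lemma hasDerivAt_H0 (t : ℝ) : HasDerivAt H0 (6 * t ^ 2 - 6 * t) t := by
  have hX := hasDerivAt_id' t
  exact (((hX.const_sub 1).fun_pow 2).fun_mul ((hX.const_mul 2).const_add 1)).congr_deriv
    (by ring)

lemma hasDerivAt_H1 (t : ℝ) : HasDerivAt H1 (6 * t - 6 * t ^ 2) t := by
  have hX := hasDerivAt_id' t
  exact ((hX.fun_pow 2).fun_mul ((hX.const_mul 2).const_sub 3)).congr_deriv (by ring)

lemma hasDerivAt_G0 (t : ℝ) : HasDerivAt G0 (3 * t ^ 2 - 4 * t + 1) t := by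
  have hX := hasDerivAt_id' t
  exact (hX.fun_mul ((hX.const_sub 1).fun_pow 2)).congr_deriv (by ring)

lemma hasDerivAt_G1 (t : ℝ) : HasDerivAt G1 (3 * t ^ 2 - 2 * t) t := by
  have hX := hasDerivAt_id' t
  exact ((hX.fun_pow 2).fun_mul (hX.sub_const 1)).congr_deriv (by ring)

/-- `f'` supplies the slopes at `0` and `1`; it need not be the derivative of `f`. -/
noncomputable def hermiteCubic (f f' : ℝ → ℝ) (t : ℝ) : ℝ :=
  H0 t * f 0 + H1 t * f 1 + G0 t * f' 0 + G1 t * f' 1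

section HermiteCubic

variable {f f' : ℝ → ℝ} {c : ℝ}

lemma hermiteCubic_of_mem (hc : c = 0 ∨ c = 1) : hermiteCubic f f' c = f c := by
  rcases hc with rfl | rfl <;> norm_num [hermiteCubic, H0, H1, G0, G1]

lemma hasDerivAt_hermiteCubic (t : ℝ) :
    HasDerivAt (hermiteCubic f f')
      ((6 * t ^ 2 - 6 * t) * f 0 + (6 * t - 6 * t ^ 2) * f 1 + (3 * t ^ 2 - 4 * t + 1) * f' 0
        + (3 * t ^ 2 - 2 * t) * f' 1) t :=
  ((((hasDerivAt_H0 t).mul_const _).add ((hasDerivAt_H1 t).mul_const _)).add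
    ((hasDerivAt_G0 t).mul_const _)).add ((hasDerivAt_G1 t).mul_const _)

lemma hasDerivAt_hermiteCubic_of_mem (hc : c = 0 ∨ c = 1) :
    HasDerivAt (hermiteCubic f f') (f' c) c :=
  (hasDerivAt_hermiteCubic c).congr_deriv (by rcases hc with rfl | rfl <;> ring)

lemma differentiable_hermiteCubic : Differentiable ℝ (hermiteCubic f f') :=
  fun t => (hasDerivAt_hermiteCubic t).differentiableAt

end HermiteCubic

def VanishesToFirstOrderAt (f : ℝ → ℝ) (c : ℝ) : Prop :=
  f c = 0 ∧ HasDerivAt f 0 c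

namespace VanishesToFirstOrderAt

variable {f g : ℝ → ℝ} {c : ℝ}

lemma add (hf : VanishesToFirstOrderAt f c) (hg : VanishesToFirstOrderAt g c) :
    VanishesToFirstOrderAt (fun t => f t + g t) c :=
  ⟨by simp [hf.1, hg.1], by simpa using hf.2.fun_add hg.2⟩

lemma mul (hf : VanishesToFirstOrderAt f c) (hg : DifferentiableAt ℝ g c) :
    VanishesToFirstOrderAt (fun t => f t * g t) c :=
  ⟨by simp [hf.1], by simpa [hf.1] using hf.2.fun_mul hg.hasDerivAt⟩

lemma const_mul (a : ℝ) (hf : VanishesToFirstOrderAt f c) :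
    VanishesToFirstOrderAt (fun t => a * f t) c :=
  ⟨by simp [hf.1], by simpa using hf.2.const_mul a⟩

lemma of_hasDerivAt_sub {d : ℝ} (hf : HasDerivAt f d c) (hg : HasDerivAt g d c)
    (h : f c = g c) : VanishesToFirstOrderAt (fun t => f t - g t) c :=
  ⟨sub_eq_zero.2 h, by simpa using hf.fun_sub hg⟩

lemma eq_and_deriv_eq (h : VanishesToFirstOrderAt (fun t => f t - g t) c)
    (hg : DifferentiableAt ℝ g c) : f c = g c ∧ deriv f c = deriv g c :=
  have hf : HasDerivAt f (0 + deriv g c) c := by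
    simpa only [sub_add_cancel] using h.2.fun_add hg.hasDerivAt
  ⟨sub_eq_zero.1 h.1, by rw [hf.deriv, zero_add]⟩

lemma hermiteCubic {f f' : ℝ → ℝ → ℝ}
    (h0 : VanishesToFirstOrderAt (f · 0) c) (h1 : VanishesToFirstOrderAt (f · 1) c)
    (h0' : VanishesToFirstOrderAt (f' · 0) c) (h1' : VanishesToFirstOrderAt (f' · 1) c)
    (y : ℝ) : VanishesToFirstOrderAt (fun t => hermiteCubic (f t) (f' t) y) c :=
  (((h0.const_mul (H0 y)).add (h1.const_mul (H1 y))).add (h0'.const_mul (G0 y))).add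
    (h1'.const_mul (G1 y))

end VanishesToFirstOrderAt

lemma vanishesToFirstOrderAt_bubble {g : ℝ → ℝ} {c : ℝ} (hc : c = 0 ∨ c = 1)
    (hg : DifferentiableAt ℝ g c) :
    VanishesToFirstOrderAt (fun t => t ^ 2 * (1 - t) ^ 2 * g t) c := by
  refine VanishesToFirstOrderAt.mul ⟨?_, ?_⟩ hg
  · rcases hc with rfl | rfl <;> simp
  · have hX := hasDerivAt_id' c
    exact ((hX.fun_pow 2).fun_mul ((hX.const_sub 1).fun_pow 2)).congr_deriv
      (by rcases hc with rfl | rfl <;> ring)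

section Slices

variable {E : Type*} [NormedAddCommGroup E] [NormedSpace ℝ E] {g : ℝ × ℝ → E}
  {g' : ℝ × ℝ →L[ℝ] E} {a b : ℝ}

lemma HasFDerivAt.hasDerivAt_slice_fst (h : HasFDerivAt g g' (a, b)) :
    HasDerivAt (fun t => g (t, b)) (g' (1, 0)) a := by
  simpa [Function.comp_def] using (h.comp a (hasFDerivAt_prodMk_left a b)).hasDerivAt

lemma HasFDerivAt.hasDerivAt_slice_snd (h : HasFDerivAt g g' (a, b)) :
    HasDerivAt (fun t => g (a, t)) (g' (0, 1)) b := by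
  simpa [Function.comp_def] using (h.comp b (hasFDerivAt_prodMk_right a b)).hasDerivAt

end Slices

section PartialDerivatives

variable {u : ℝ → ℝ → ℝ}

lemma pdx_eq_fderiv {a b : ℝ} (hu : DifferentiableAt ℝ (Function.uncurry u) (a, b)) :
    pdx u a b = fderiv ℝ (Function.uncurry u) (a, b) (1, 0) :=
  hu.hasFDerivAt.hasDerivAt_slice_fst.deriv

lemma pdy_eq_fderiv {a b : ℝ} (hu : DifferentiableAt ℝ (Function.uncurry u) (a, b)) :
    pdy u a b = fderiv ℝ (Function.uncurry u) (a, b) (0, 1) :=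
  hu.hasFDerivAt.hasDerivAt_slice_snd.deriv

lemma hasDerivAt_pdx (hu : Differentiable ℝ (Function.uncurry u)) (a b : ℝ) :
    HasDerivAt (u · b) (pdx u a b) a :=
  (hu (a, b)).hasFDerivAt.hasDerivAt_slice_fst.differentiableAt.hasDerivAt

lemma hasDerivAt_pdy (hu : Differentiable ℝ (Function.uncurry u)) (a b : ℝ) :
    HasDerivAt (u a ·) (pdy u a b) b :=
  (hu (a, b)).hasFDerivAt.hasDerivAt_slice_snd.differentiableAt.hasDerivAt

variable (hu : ContDiff ℝ 2 (Function.uncurry u))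
include hu

lemma hasDerivAt_pdy_fst_fderiv (a b : ℝ) :
    HasDerivAt (pdy u · b)
      (fderiv ℝ (fderiv ℝ (Function.uncurry u)) (a, b) (1, 0) (0, 1)) a := by
  have h := ((hu.fderiv_right le_rfl).differentiable one_ne_zero (a, b)).hasFDerivAt
    |>.hasDerivAt_slice_fst |>.clm_apply (hasDerivAt_const a ((0 : ℝ), (1 : ℝ)))
  simp only [map_zero, add_zero] at h
  exact h.congr_of_eventuallyEq
    (.of_forall fun t => pdy_eq_fderiv (hu.differentiable two_ne_zero _))

lemma hasDerivAt_pdx_snd_fderiv (a b : ℝ) :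
    HasDerivAt (pdx u a ·)
      (fderiv ℝ (fderiv ℝ (Function.uncurry u)) (a, b) (0, 1) (1, 0)) b := by
  have h := ((hu.fderiv_right le_rfl).differentiable one_ne_zero (a, b)).hasFDerivAt
    |>.hasDerivAt_slice_snd |>.clm_apply (hasDerivAt_const b ((1 : ℝ), (0 : ℝ)))
  simp only [map_zero, add_zero] at h
  exact h.congr_of_eventuallyEq
    (.of_forall fun t => pdx_eq_fderiv (hu.differentiable two_ne_zero _))

lemma hasDerivAt_pdxy_fst (a b : ℝ) : HasDerivAt (pdy u · b) (pdxy u a b) a := by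
  have h := hasDerivAt_pdy_fst_fderiv hu a b
  rwa [← h.deriv] at h

lemma hasDerivAt_pdxy_snd (a b : ℝ) : HasDerivAt (pdx u a ·) (pdxy u a b) b := by
  -- `pdxy` differentiates `pdy` in `x`; here `pdx` is differentiated in `y`, so Schwarz is needed.
  rw [show pdxy u a b = _ from (hasDerivAt_pdy_fst_fderiv hu a b).deriv,
    (hu.contDiffAt.isSymmSndFDerivAt (by simp)).eq]
  exact hasDerivAt_pdx_snd_fderiv hu a b

end PartialDerivatives

section BicubicCorner

variable (u : ℝ → ℝ → ℝ) {a b : ℝ}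

lemma bicubicCorner_eq_hermiteCubic_fst (x y : ℝ) :
    bicubicCorner u x y = hermiteCubic (fun a => hermiteCubic (u a) (pdy u a) y)
      (fun a => hermiteCubic (pdx u a) (pdxy u a) y) x := by
  simp only [bicubicCorner, hermiteCubic]; ring

lemma bicubicCorner_eq_hermiteCubic_snd (x y : ℝ) :
    bicubicCorner u x y = hermiteCubic (fun b => hermiteCubic (u · b) (pdx u · b) x)
      (fun b => hermiteCubic (pdy u · b) (pdxy u · b) x) y := by
  simp only [bicubicCorner, hermiteCubic]; ring

lemma bicubicCorner_fst_edge (hb : b = 0 ∨ b = 1) (x : ℝ) :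
    bicubicCorner u x b = hermiteCubic (u · b) (pdx u · b) x := by
  rw [bicubicCorner_eq_hermiteCubic_snd, hermiteCubic_of_mem hb]

lemma bicubicCorner_snd_edge (ha : a = 0 ∨ a = 1) (y : ℝ) :
    bicubicCorner u a y = hermiteCubic (u a) (pdy u a) y := by
  rw [bicubicCorner_eq_hermiteCubic_fst, hermiteCubic_of_mem ha]

lemma pdx_bicubicCorner (ha : a = 0 ∨ a = 1) (y : ℝ) :
    pdx (bicubicCorner u) a y = hermiteCubic (pdx u a) (pdxy u a) y := by
  simp only [pdx, bicubicCorner_eq_hermiteCubic_fst u _ y]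
  exact (hasDerivAt_hermiteCubic_of_mem ha).deriv

lemma pdy_bicubicCorner (hb : b = 0 ∨ b = 1) (x : ℝ) :
    pdy (bicubicCorner u) x b = hermiteCubic (pdy u · b) (pdxy u · b) x := by
  simp only [pdy, bicubicCorner_eq_hermiteCubic_snd u x]
  exact (hasDerivAt_hermiteCubic_of_mem hb).deriv

lemma differentiable_bicubicCorner_fst (y : ℝ) : Differentiable ℝ (bicubicCorner u · y) := by
  simp only [bicubicCorner_eq_hermiteCubic_fst u _ y]
  exact differentiable_hermiteCubic

lemma differentiable_bicubicCorner_snd (x : ℝ) : Differentiable ℝ (bicubicCorner u x ·) := by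
  simp only [bicubicCorner_eq_hermiteCubic_snd u x]
  exact differentiable_hermiteCubic

end BicubicCorner

/-- The corner Hermite data of `w` at `(a, b)` (value, gradient, mixed partial) vanish, in the
form the transfinite interpolant needs: along each grid line through the corner, both `w` and its
transversal partial vanish to first order. -/
structure CornerFlat (w : ℝ → ℝ → ℝ) (a b : ℝ) : Prop where
  fst : VanishesToFirstOrderAt (w · b) a
  pdy_fst : VanishesToFirstOrderAt (pdy w · b) a
  snd : VanishesToFirstOrderAt (w a ·) b
  pdx_snd : VanishesToFirstOrderAt (pdx w a ·) b

lemma CornerFlat.swap {w : ℝ → ℝ → ℝ} {a b : ℝ} (h : CornerFlat w a b) :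
    CornerFlat (fun x y => w y x) b a :=
  ⟨h.snd, h.pdx_snd, h.fst, h.pdy_fst⟩

lemma pdx_sub {u v : ℝ → ℝ → ℝ} {a b : ℝ} (hu : DifferentiableAt ℝ (u · b) a)
    (hv : DifferentiableAt ℝ (v · b) a) :
    pdx (fun x y => u x y - v x y) a b = pdx u a b - pdx v a b :=
  deriv_sub hu hv

lemma pdy_sub {u v : ℝ → ℝ → ℝ} {a b : ℝ} (hu : DifferentiableAt ℝ (u a ·) b)
    (hv : DifferentiableAt ℝ (v a ·) b) :
    pdy (fun x y => u x y - v x y) a b = pdy u a b - pdy v a b :=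
  deriv_sub hu hv

lemma cornerFlat_sub_bicubicCorner {u : ℝ → ℝ → ℝ}
    (hu : ContDiff ℝ 2 (Function.uncurry u)) {a b : ℝ} (ha : a = 0 ∨ a = 1)
    (hb : b = 0 ∨ b = 1) :
    CornerFlat (fun x y => u x y - bicubicCorner u x y) a b := by
  have hU : Differentiable ℝ (Function.uncurry u) := hu.differentiable two_ne_zero
  refine ⟨?_, ?_, ?_, ?_⟩
  · simp only [bicubicCorner_fst_edge u hb]
    exact .of_hasDerivAt_sub (hasDerivAt_pdx hU a b) (hasDerivAt_hermiteCubic_of_mem ha)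
      (by rw [hermiteCubic_of_mem ha])
  · simp only [pdy_sub (hasDerivAt_pdy hU _ b).differentiableAt
      (differentiable_bicubicCorner_snd u _ b), pdy_bicubicCorner u hb]
    exact .of_hasDerivAt_sub (hasDerivAt_pdxy_fst hu a b) (hasDerivAt_hermiteCubic_of_mem ha)
      (by rw [hermiteCubic_of_mem ha])
  · simp only [bicubicCorner_snd_edge u ha]
    exact .of_hasDerivAt_sub (hasDerivAt_pdy hU a b) (hasDerivAt_hermiteCubic_of_mem hb)
      (by rw [hermiteCubic_of_mem hb])
  · simp only [pdx_sub (hasDerivAt_pdx hU a _).differentiableAt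
      (differentiable_bicubicCorner_fst u _ a), pdx_bicubicCorner u ha]
    exact .of_hasDerivAt_sub (hasDerivAt_pdxy_snd hu a b) (hasDerivAt_hermiteCubic_of_mem hb)
      (by rw [hermiteCubic_of_mem hb])

lemma hermiteTransfinite_eq (v : ℝ → ℝ → ℝ) (x y : ℝ) :
    hermiteTransfinite v x y
      = hermiteCubic (v · y) (pdx v · y) x + hermiteCubic (v x) (pdy v x) y := by
  simp only [hermiteTransfinite, hermiteCubic]; ring

lemma hermiteTransfinite_swap (v : ℝ → ℝ → ℝ) (x y : ℝ) :
    hermiteTransfinite (fun a b => v b a) x y = hermiteTransfinite v y x := by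
  rw [hermiteTransfinite_eq, hermiteTransfinite_eq, add_comm]; rfl

section Transfinite

variable {w : ℝ → ℝ → ℝ} {c : ℝ} (hc : c = 0 ∨ c = 1)
include hc

lemma vanishesToFirstOrderAt_hermiteTransfinite_sub_fst (h0 : CornerFlat w c 0)
    (h1 : CornerFlat w c 1) {y : ℝ} (hw : DifferentiableAt ℝ (w · y) c) :
    VanishesToFirstOrderAt (fun t => hermiteTransfinite w t y - w t y) c := by
  have hedge :
      VanishesToFirstOrderAt (fun t => hermiteCubic (w · y) (pdx w · y) t - w t y) c :=
    .of_hasDerivAt_sub (hasDerivAt_hermiteCubic_of_mem hc) hw.hasDerivAt (hermiteCubic_of_mem hc)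
  have hcorners : VanishesToFirstOrderAt (fun t => hermiteCubic (w t) (pdy w t) y) c :=
    .hermiteCubic h0.fst h1.fst h0.pdy_fst h1.pdy_fst y
  convert hedge.add hcorners using 2 with t
  rw [hermiteTransfinite_eq]; ring

lemma vanishesToFirstOrderAt_hermiteTransfinite_sub_snd (h0 : CornerFlat w 0 c)
    (h1 : CornerFlat w 1 c) {x : ℝ} (hw : DifferentiableAt ℝ (w x ·) c) :
    VanishesToFirstOrderAt (fun t => hermiteTransfinite w x t - w x t) c := by
  simpa only [hermiteTransfinite_swap] using
    vanishesToFirstOrderAt_hermiteTransfinite_sub_fst hc h0.swap h1.swap hw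

end Transfinite

section CornerCorrection

variable {u : ℝ → ℝ → ℝ} (hu : ContDiff ℝ 2 (Function.uncurry u))
  {c : ℝ} (hc : c = 0 ∨ c = 1)
include hu hc

lemma vanishesToFirstOrderAt_hermiteTransfinite_sub_bicubicCorner_fst (y : ℝ) :
    VanishesToFirstOrderAt
      (fun t => hermiteTransfinite (fun a b => u a b - bicubicCorner u a b) t y
        - (u t y - bicubicCorner u t y)) c :=
  vanishesToFirstOrderAt_hermiteTransfinite_sub_fst hc
    (cornerFlat_sub_bicubicCorner hu hc (.inl rfl))
    (cornerFlat_sub_bicubicCorner hu hc (.inr rfl))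
    ((hasDerivAt_pdx (hu.differentiable two_ne_zero) c y).differentiableAt.sub
      (differentiable_bicubicCorner_fst u y c))

lemma vanishesToFirstOrderAt_hermiteTransfinite_sub_bicubicCorner_snd (x : ℝ) :
    VanishesToFirstOrderAt
      (fun t => hermiteTransfinite (fun a b => u a b - bicubicCorner u a b) x t
        - (u x t - bicubicCorner u x t)) c :=
  vanishesToFirstOrderAt_hermiteTransfinite_sub_snd hc
    (cornerFlat_sub_bicubicCorner hu (.inl rfl) hc)
    (cornerFlat_sub_bicubicCorner hu (.inr rfl) hc)
    ((hasDerivAt_pdy (hu.differentiable two_ne_zero) x c).differentiableAt.sub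
      (differentiable_bicubicCorner_snd u x c))

end CornerCorrection

/-- Theorem 3.1: the RNN-BP solution satisfies the clamped boundary condition exactly. -/
theorem rnnBP_clamped_exact
    (u : ℝ → ℝ → ℝ) (hu : ContDiff ℝ 2 (fun p : ℝ × ℝ => u p.1 p.2))
    (φ : ℝ → ℝ → ℝ) (hφ : Differentiable ℝ (fun p : ℝ × ℝ => φ p.1 p.2))
    (uhat : ℝ → ℝ → ℝ)
    (huhat : ∀ x y : ℝ, uhat x y =
      x ^ 2 * (1 - x) ^ 2 * y ^ 2 * (1 - y) ^ 2 * φ x y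
        + hermiteTransfinite (fun a b => u a b - bicubicCorner u a b) x y
        + bicubicCorner u x y) :
    ∀ x ∈ Set.Icc (0 : ℝ) 1, ∀ y ∈ Set.Icc (0 : ℝ) 1,
      uhat 0 y = u 0 y ∧ uhat 1 y = u 1 y ∧ uhat x 0 = u x 0 ∧ uhat x 1 = u x 1 ∧
      pdx uhat 0 y = pdx u 0 y ∧ pdx uhat 1 y = pdx u 1 y ∧
      pdy uhat x 0 = pdy u x 0 ∧ pdy uhat x 1 = pdy u x 1 := by
  intro x _ y _
  have hU : Differentiable ℝ (Function.uncurry u) := hu.differentiable two_ne_zero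
  have herr (s t : ℝ) : uhat s t - u s t
      = s ^ 2 * (1 - s) ^ 2 * (t ^ 2 * (1 - t) ^ 2 * φ s t)
        + (hermiteTransfinite (fun a b => u a b - bicubicCorner u a b) s t
          - (u s t - bicubicCorner u s t)) := by
    rw [huhat]; ring
  have hside_fst {c : ℝ} (hc : c = 0 ∨ c = 1) :
      uhat c y = u c y ∧ pdx uhat c y = pdx u c y := by
    refine VanishesToFirstOrderAt.eq_and_deriv_eq (f := (uhat · y)) ?_
      (hasDerivAt_pdx hU c y).differentiableAt
    simp only [herr]
    exact (vanishesToFirstOrderAt_bubble hc (by fun_prop)).add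
      (vanishesToFirstOrderAt_hermiteTransfinite_sub_bicubicCorner_fst hu hc y)
  have hside_snd {c : ℝ} (hc : c = 0 ∨ c = 1) :
      uhat x c = u x c ∧ pdy uhat x c = pdy u x c := by
    refine VanishesToFirstOrderAt.eq_and_deriv_eq (f := (uhat x ·)) ?_
      (hasDerivAt_pdy hU x c).differentiableAt
    simp only [herr]
    convert (vanishesToFirstOrderAt_bubble hc (g := fun t => x ^ 2 * (1 - x) ^ 2 * φ x t)
      (by fun_prop)).add (vanishesToFirstOrderAt_hermiteTransfinite_sub_bicubicCorner_snd hu hc x)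
      using 2 with t
    ring
  exact ⟨(hside_fst (.inl rfl)).1, (hside_fst (.inr rfl)).1, (hside_snd (.inl rfl)).1,
    (hside_snd (.inr rfl)).1, (hside_fst (.inl rfl)).2, (hside_fst (.inr rfl)).2,
    (hside_snd (.inl rfl)).2, (hside_snd (.inr rfl)).2⟩
end

section
/- Let f1 : ℝ → ℝ be C¹ and let p1 : ℝ → ℝ be a polynomial function of degree at most 3; set u(x,y) = f1(x)·p1(y). Suppose that u, ∂u/∂x, ∂u/∂y, and ∂²u/∂x∂y all vanish at the four corners (0,0), (1,0), (0,1), (1,1). Then u coincides on [0,1]² with its Hermite transfinite boundary interpolant s on the unit square. -/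
/-!
Write `P_x`, `P_y` for cubic Hermite interpolation in one variable from the data at `0` and `1`.
For a product `u = f ⊗ p`, the transfinite interpolant is `P_x u + P_y u = (P f) ⊗ p + f ⊗ (P p)`.
Since `p` is a cubic, `P p = p`, so it remains to see that `(P f) ⊗ p = (P f) ⊗ (P p)` vanishes:
this is the bicubic corner interpolant of `u`, built from the corner data, which are all zero.
-/

noncomputable def cubicHermiteInterpolant (g : ℝ → ℝ) (t : ℝ) : ℝ :=
  H0 t * g 0 + H1 t * g 1 + G0 t * deriv g 0 + G1 t * deriv g 1

theorem cubicHermiteInterpolant_polynomial_eval {p : Polynomial ℝ} (hp : p.degree ≤ 3) (t : ℝ) :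
    cubicHermiteInterpolant p.eval t = p.eval t := by
  have hdeg : p.natDegree < 4 := Nat.lt_succ_of_le (Polynomial.natDegree_le_of_degree_le hp)
  have hdeg_derivative : p.derivative.natDegree < 4 :=
    (Polynomial.natDegree_derivative_le p).trans_lt (by omega)
  have hc4 : p.coeff 4 = 0 := Polynomial.coeff_eq_zero_of_natDegree_lt hdeg
  rw [cubicHermiteInterpolant, Polynomial.deriv, Polynomial.deriv]
  simp only [Polynomial.eval_eq_sum_range' hdeg, Polynomial.eval_eq_sum_range' hdeg_derivative,
    Polynomial.coeff_derivative, hc4, Finset.sum_range_succ, Finset.sum_range_zero, H0, H1, G0, G1]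
  push_cast
  ring

section Product

variable (f g : ℝ → ℝ) (x y : ℝ)

theorem pdx_mul : pdx (fun a b => f a * g b) x y = deriv f x * g y :=
  deriv_mul_const_field _

theorem pdy_mul : pdy (fun a b => f a * g b) x y = f x * deriv g y :=
  deriv_const_mul_field _

theorem pdxy_mul : pdxy (fun a b => f a * g b) x y = deriv f x * deriv g y := by
  simp only [pdxy, pdy_mul, pdx_mul]

theorem hermiteTransfinite_mul :
    hermiteTransfinite (fun a b => f a * g b) x y =
      cubicHermiteInterpolant f x * g y + f x * cubicHermiteInterpolant g y := by
  simp only [hermiteTransfinite, cubicHermiteInterpolant, pdx_mul, pdy_mul]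
  ring

theorem bicubicCorner_mul :
    bicubicCorner (fun a b => f a * g b) x y =
      cubicHermiteInterpolant f x * cubicHermiteInterpolant g y := by
  simp only [bicubicCorner, cubicHermiteInterpolant, pdx_mul, pdy_mul, pdxy_mul]
  ring

end Product

theorem bicubicCorner_eq_zero {u : ℝ → ℝ → ℝ}
    (hcorner : ∀ ci cj : ℝ, (ci = 0 ∨ ci = 1) → (cj = 0 ∨ cj = 1) →
      u ci cj = 0 ∧ pdx u ci cj = 0 ∧ pdy u ci cj = 0 ∧ pdxy u ci cj = 0) (x y : ℝ) :
    bicubicCorner u x y = 0 := by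
  obtain ⟨h00, hx00, hy00, hxy00⟩ := hcorner 0 0 (.inl rfl) (.inl rfl)
  obtain ⟨h01, hx01, hy01, hxy01⟩ := hcorner 0 1 (.inl rfl) (.inr rfl)
  obtain ⟨h10, hx10, hy10, hxy10⟩ := hcorner 1 0 (.inr rfl) (.inl rfl)
  obtain ⟨h11, hx11, hy11, hxy11⟩ := hcorner 1 1 (.inr rfl) (.inr rfl)
  simp only [bicubicCorner, h00, hx00, hy00, hxy00, h01, hx01, hy01, hxy01,
    h10, hx10, hy10, hxy10, h11, hx11, hy11, hxy11]
  ring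

theorem hermite_transfinite_reproduces_product_general
    (f1 : ℝ → ℝ)
    (p1 : Polynomial ℝ) (hp1 : p1.degree ≤ 3)
    (u : ℝ → ℝ → ℝ) (hu : ∀ x y : ℝ, u x y = f1 x * p1.eval y)
    (hcorner : ∀ ci cj : ℝ, (ci = 0 ∨ ci = 1) → (cj = 0 ∨ cj = 1) →
      u ci cj = 0 ∧ pdx u ci cj = 0 ∧ pdy u ci cj = 0 ∧ pdxy u ci cj = 0) :
    ∀ x ∈ Set.Icc (0 : ℝ) 1, ∀ y ∈ Set.Icc (0 : ℝ) 1,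
      u x y = hermiteTransfinite u x y := by
  obtain rfl : u = fun a b => f1 a * p1.eval b := funext₂ hu
  intro x _ y _
  have hcubic : cubicHermiteInterpolant p1.eval y = p1.eval y :=
    cubicHermiteInterpolant_polynomial_eval hp1 y
  have hcorner_term : cubicHermiteInterpolant f1 x * p1.eval y = 0 := by
    rw [← hcubic, ← bicubicCorner_mul, bicubicCorner_eq_zero hcorner]
  rw [hermiteTransfinite_mul, hcorner_term, hcubic, zero_add]

/-- First step in the proof of Theorem 3.2: if `u(x,y) = f1(x)·p1(y)` with `deg p1 ≤ 3`
and `u, ∂u/∂x, ∂u/∂y, ∂²u/∂x∂y` vanish at the four corners, then `u` equals its Hermite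
transfinite boundary interpolant on the unit square. -/
theorem hermite_transfinite_reproduces_product
    (f1 : ℝ → ℝ) (hf1 : ContDiff ℝ 1 f1)
    (p1 : Polynomial ℝ) (hp1 : p1.degree ≤ 3)
    (u : ℝ → ℝ → ℝ) (hu : ∀ x y : ℝ, u x y = f1 x * p1.eval y)
    (hcorner : ∀ ci cj : ℝ, (ci = 0 ∨ ci = 1) → (cj = 0 ∨ cj = 1) →
      u ci cj = 0 ∧ pdx u ci cj = 0 ∧ pdy u ci cj = 0 ∧ pdxy u ci cj = 0) :
    ∀ x ∈ Set.Icc (0 : ℝ) 1, ∀ y ∈ Set.Icc (0 : ℝ) 1,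
      u x y = hermiteTransfinite u x y :=
  hermite_transfinite_reproduces_product_general f1 p1 hp1 u hu hcorner
end
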